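/- arXiv:1606.05300 — 3 statements merged into one kernel-verified Lean document; each statement's English description precedes it below -/
import Mathlib

section
/- Define d_{mn} recursively for m, n ∈ {-1, 0, 1, ...} by d_{-1,-1} = 0, d_{-1,k} = d_{k,-1} = 1 for k ≥ 0, and for m, n ≥ 0, d_{mn} = min over feasible transport plans z between the probability vectors π^m and π^n of Σ_{i=0}^m Σ_{j=0}^n z_{ij} d_{i-1,j-1}. Then for any nonexpansive map T : C → C on a convex set C with diameter 1 in a normed space, the Krasnosel'skii–Mann iterates satisfy ‖x^m − x^n‖ ≤ d_{mn} for all m, n ∈ ℕ. -/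
open Finset

/-- `kmPi α i n` is `π_i^n = α_i ∏_{k=i+1}^n (1 - α_k)` (empty product = 1). -/
noncomputable def kmPi (α : ℕ → ℝ) (i n : ℕ) : ℝ :=
  α i * ∏ k ∈ Finset.Icc (i + 1) n, (1 - α k)
/-- A feasible transport plan between the probability vectors `π^m` and `π^n`. -/
def IsPlan (α : ℕ → ℝ) (m n : ℕ) (z : ℕ → ℕ → ℝ) : Prop :=
  (∀ i ≤ m, ∀ j ≤ n, 0 ≤ z i j) ∧
  (∀ i ≤ m, ∑ j ∈ Finset.range (n + 1), z i j = kmPi α i m) ∧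
  (∀ j ≤ n, ∑ i ∈ Finset.range (m + 1), z i j = kmPi α j n)

/-- Transport cost `Σ_{i=0}^m Σ_{j=0}^n z_{ij} d_{i-1,j-1}`, where indices of `D` are
shifted by one: `D i j` stands for `d_{i-1,j-1}`. -/
noncomputable def planCost (D : ℕ → ℕ → ℝ) (m n : ℕ) (z : ℕ → ℕ → ℝ) : ℝ :=
  ∑ i ∈ Finset.range (m + 1), ∑ j ∈ Finset.range (n + 1), z i j * D i j

/-- `D : ℕ → ℕ → ℝ` encodes the family `d_{mn}` for `m, n ∈ {-1,0,1,...}` with indices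
shifted by one: `D (m+1) (n+1) = d_{m,n}`, `D 0 (k+1) = d_{-1,k}`, etc.  It is the
recursive optimal-transport family: boundary values `d_{-1,-1} = 0`,
`d_{-1,k} = d_{k,-1} = 1`, and `d_{mn}` is the minimum transport cost between
`π^m` and `π^n` (the minimum, i.e. attained greatest lower bound). -/
def IsKMDist (α : ℕ → ℝ) (D : ℕ → ℕ → ℝ) : Prop :=
  D 0 0 = 0 ∧ (∀ k : ℕ, D 0 (k + 1) = 1) ∧ (∀ k : ℕ, D (k + 1) 0 = 1) ∧
  ∀ m n : ℕ,
    IsLeast {c : ℝ | ∃ z : ℕ → ℕ → ℝ, IsPlan α m n z ∧ c = planCost D m n z}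
      (D (m + 1) (n + 1))

/-!
Unrolling the recursion writes every iterate as a convex combination
`x^n = Σ_{i ≤ n} π_i^n y^i` of the anchors `y^0 = x^0`, `y^{i+1} = T x^i`. Given an optimal
plan `z` between `π^m` and `π^n`, `x^m - x^n = Σ_{i,j} z_{ij} (y^i - y^j)`, and
`‖y^i - y^j‖ ≤ d_{i-1,j-1}`: for `i, j ≥ 1` by nonexpansiveness and induction on `m + n`,
otherwise because `C` has diameter `1`.
-/

lemma kmPi_self (α : ℕ → ℝ) (n : ℕ) : kmPi α n n = α n := by
  simp [kmPi]

lemma kmPi_succ_of_le {α : ℕ → ℝ} {i n : ℕ} (h : i ≤ n) :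
    kmPi α i (n + 1) = (1 - α (n + 1)) * kmPi α i n := by
  rw [kmPi, kmPi, prod_Icc_succ_top (by omega)]
  ring

def kmAnchor {X : Type*} (T : X → X) (x : ℕ → X) : ℕ → X
  | 0 => x 0
  | k + 1 => T (x k)

lemma kmAnchor_mem {X : Type*} {C : Set X} {T : X → X} {x : ℕ → X} (hT : Set.MapsTo T C C)
    (hxC : ∀ n, x n ∈ C) : ∀ i, kmAnchor T x i ∈ C
  | 0 => hxC 0
  | k + 1 => hT (hxC k)

section Module

variable {E : Type*} [AddCommGroup E] [Module ℝ E]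

lemma eq_sum_kmPi_smul {α : ℕ → ℝ} (hα0 : α 0 = 1) {x y : ℕ → E} (hx0 : x 0 = y 0)
    (hrec : ∀ n, x (n + 1) = (1 - α (n + 1)) • x n + α (n + 1) • y (n + 1)) (n : ℕ) :
    x n = ∑ i ∈ range (n + 1), kmPi α i n • y i := by
  induction n with
  | zero => simp [kmPi_self, hα0, hx0]
  | succ k ih =>
    rw [sum_range_succ, kmPi_self, hrec k, ih, smul_sum]
    congr 1
    refine sum_congr rfl fun i hi => ?_
    rw [kmPi_succ_of_le (Nat.lt_succ_iff.mp (mem_range.mp hi)), mul_smul]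

lemma sum_kmPi_smul_sub_eq_sum_plan {α : ℕ → ℝ} {m n : ℕ} {z : ℕ → ℕ → ℝ}
    (hz : IsPlan α m n z) (y : ℕ → E) :
    ∑ i ∈ range (m + 1), kmPi α i m • y i - ∑ j ∈ range (n + 1), kmPi α j n • y j =
      ∑ i ∈ range (m + 1), ∑ j ∈ range (n + 1), z i j • (y i - y j) := by
  obtain ⟨-, hrow, hcol⟩ := hz
  have hleft : ∑ i ∈ range (m + 1), kmPi α i m • y i =
      ∑ i ∈ range (m + 1), ∑ j ∈ range (n + 1), z i j • y i :=
    sum_congr rfl fun i hi => by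
      rw [← sum_smul, hrow i (Nat.lt_succ_iff.mp (mem_range.mp hi))]
  have hright : ∑ j ∈ range (n + 1), kmPi α j n • y j =
      ∑ i ∈ range (m + 1), ∑ j ∈ range (n + 1), z i j • y j := by
    rw [sum_comm]
    exact sum_congr rfl fun j hj => by
      rw [← sum_smul, hcol j (Nat.lt_succ_iff.mp (mem_range.mp hj))]
  simp only [hleft, hright, ← sum_sub_distrib, smul_sub]

lemma km_iterate_mem {C : Set E} {T : E → E} {x : ℕ → E} {α : ℕ → ℝ} (hCconv : Convex ℝ C)
    (hT : Set.MapsTo T C C) (hα : ∀ n, α (n + 1) ∈ Set.Icc (0 : ℝ) 1) (hx0 : x 0 ∈ C)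
    (hrec : ∀ n : ℕ, x (n + 1) = (1 - α (n + 1)) • x n + α (n + 1) • T (x n)) (n : ℕ) :
    x n ∈ C := by
  induction n with
  | zero => exact hx0
  | succ k ih =>
    obtain ⟨hnonneg, hle⟩ := hα k
    rw [hrec k]
    exact hCconv ih (hT ih) (by linarith) hnonneg (by ring)

end Module

lemma norm_sum_kmPi_smul_sub_le_planCost {E : Type*} [SeminormedAddCommGroup E]
    [NormedSpace ℝ E] {α : ℕ → ℝ} {m n : ℕ} {z : ℕ → ℕ → ℝ} (hz : IsPlan α m n z)
    {y : ℕ → E} {D : ℕ → ℕ → ℝ} (hyD : ∀ i ≤ m, ∀ j ≤ n, ‖y i - y j‖ ≤ D i j) :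
    ‖∑ i ∈ range (m + 1), kmPi α i m • y i - ∑ j ∈ range (n + 1), kmPi α j n • y j‖ ≤
      planCost D m n z := by
  rw [sum_kmPi_smul_sub_eq_sum_plan hz, planCost]
  refine (norm_sum_le _ _).trans (sum_le_sum fun i hi => ?_)
  refine (norm_sum_le _ _).trans (sum_le_sum fun j hj => ?_)
  have him := Nat.lt_succ_iff.mp (mem_range.mp hi)
  have hjn := Nat.lt_succ_iff.mp (mem_range.mp hj)
  have hz0 := hz.1 i him j hjn
  rw [norm_smul, Real.norm_of_nonneg hz0]
  exact mul_le_mul_of_nonneg_left (hyD i him j hjn) hz0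

lemma norm_kmAnchor_sub_le {X : Type*} [SeminormedAddCommGroup X] {C : Set X} {T : X → X}
    {x : ℕ → X} {α : ℕ → ℝ} {D : ℕ → ℕ → ℝ} (hD : IsKMDist α D)
    (hCbdd : Bornology.IsBounded C) (hCdiam : Metric.diam C = 1) (hT : Set.MapsTo T C C)
    (hTne : ∀ x ∈ C, ∀ y ∈ C, ‖T x - T y‖ ≤ ‖x - y‖) (hxC : ∀ n, x n ∈ C) (i j : ℕ)
    (hx : ∀ p < i, ∀ q < j, ‖x p - x q‖ ≤ D (p + 1) (q + 1)) :
    ‖kmAnchor T x i - kmAnchor T x j‖ ≤ D i j := by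
  obtain ⟨h00, h0s, hs0, -⟩ := hD
  have hdiam : ‖kmAnchor T x i - kmAnchor T x j‖ ≤ 1 := by
    rw [← dist_eq_norm, ← hCdiam]
    exact Metric.dist_le_diam_of_mem hCbdd (kmAnchor_mem hT hxC i) (kmAnchor_mem hT hxC j)
  match i, j with
  | 0, 0 => simp [h00]
  | 0, k + 1 => rwa [h0s k]
  | k + 1, 0 => rwa [hs0 k]
  | p + 1, q + 1 =>
    exact (hTne _ (hxC p) _ (hxC q)).trans (hx p (by omega) q (by omega))

theorem km_iterates_le_dist_general {X : Type*} [NormedAddCommGroup X] [NormedSpace ℝ X]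
    (C : Set X) (hCconv : Convex ℝ C)
    (hCbdd : Bornology.IsBounded C) (hCdiam : Metric.diam C = 1)
    (T : X → X) (hT : Set.MapsTo T C C)
    (hTne : ∀ x ∈ C, ∀ y ∈ C, ‖T x - T y‖ ≤ ‖x - y‖)
    (α : ℕ → ℝ) (hα0 : α 0 = 1) (hα : ∀ n, 1 ≤ n → α n ∈ Set.Ioo (0 : ℝ) 1)
    (D : ℕ → ℕ → ℝ) (hD : IsKMDist α D)
    (x : ℕ → X) (hx0 : x 0 ∈ C)
    (hrec : ∀ n : ℕ, x (n + 1) = (1 - α (n + 1)) • x n + α (n + 1) • T (x n)) :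
    ∀ m n : ℕ, ‖x m - x n‖ ≤ D (m + 1) (n + 1) := by
  have hα' n : α (n + 1) ∈ Set.Icc 0 1 := Set.Ioo_subset_Icc_self (hα (n + 1) (by omega))
  have hxC := km_iterate_mem hCconv hT hα' hx0 hrec
  have hrep := eq_sum_kmPi_smul (x := x) (y := kmAnchor T x) hα0 rfl hrec
  intro m n
  induction hN : m + n using Nat.strong_induction_on generalizing m n with
  | _ N IH =>
    obtain ⟨z, hz, hcost⟩ := (hD.2.2.2 m n).1
    rw [hrep m, hrep n, hcost]
    refine norm_sum_kmPi_smul_sub_le_planCost hz fun i hi j hj => ?_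
    exact norm_kmAnchor_sub_le hD hCbdd hCdiam hT hTne hxC i j
      fun p hp q hq => IH (p + q) (by omega) p q rfl

/-- the KM iterates of a nonexpansive map on a convex set of diameter 1
satisfy `‖x^m - x^n‖ ≤ d_{mn}` (recall `D (m+1) (n+1) = d_{mn}`). -/
theorem km_iterates_le_dist {X : Type*} [NormedAddCommGroup X] [NormedSpace ℝ X]
    (C : Set X) (hCconv : Convex ℝ C) (hCclosed : IsClosed C)
    (hCbdd : Bornology.IsBounded C) (hCdiam : Metric.diam C = 1)
    (T : X → X) (hT : Set.MapsTo T C C)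
    (hTne : ∀ x ∈ C, ∀ y ∈ C, ‖T x - T y‖ ≤ ‖x - y‖)
    (α : ℕ → ℝ) (hα0 : α 0 = 1) (hα : ∀ n, 1 ≤ n → α n ∈ Set.Ioo (0 : ℝ) 1)
    (D : ℕ → ℕ → ℝ) (hD : IsKMDist α D)
    (x : ℕ → X) (hx0 : x 0 ∈ C)
    (hrec : ∀ n : ℕ, x (n + 1) = (1 - α (n + 1)) • x n + α (n + 1) • T (x n)) :
    ∀ m n : ℕ, ‖x m - x n‖ ≤ D (m + 1) (n + 1) :=
  km_iterates_le_dist_general C hCconv hCbdd hCdiam T hT hTne α hα0 hα D hD x hx0 hrec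
end

section
/- For fixed m, the map n ↦ d_{mn} is nondecreasing for n ≥ m, i.e., d_{mn} ≤ d_{m,n+1} for all n ≥ m. -/
open Finset

/-!
Induction on `m`. Take an optimal plan `z` from `π^m` to `π^{n+1}`. Since
`π^{n+1} = (1 - α_{n+1}) π^n + α_{n+1} δ_{n+1}`, the mass in the last column must be
redistributed: push it leftwards one column at a time, each column keeping what its capacity
allows, taken from the bottom rows first. Because `∑_{i ≥ t} π^m_i ≤ ∑_{j ≥ t} π^n_j` for
`m ≤ n`, a Hall-type condition holds which guarantees that no mass ever crosses the diagonal: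
in row `i` mass only moves leftwards among the columns `j ≥ i`. There `j ↦ d_{i-1,j-1}` is
nondecreasing by the induction hypothesis, so by Abel summation the cost does not increase.
-/

theorem sum_mul_le_sum_mul_of_prefix_sum_le {u v c : ℕ → ℝ} {K i₀ : ℕ}
    (heq : ∀ j < i₀, u j = v j)
    (hpre : ∀ t < K, ∑ j ∈ range t, v j ≤ ∑ j ∈ range t, u j)
    (htot : ∑ j ∈ range K, u j = ∑ j ∈ range K, v j)
    (hc : ∀ j, i₀ ≤ j → j + 1 < K → c j ≤ c (j + 1)) :
    ∑ j ∈ range K, u j * c j ≤ ∑ j ∈ range K, v j * c j := by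
  have hparts := sum_range_by_parts c (fun j => u j - v j) K
  simp only [smul_eq_mul, sum_sub_distrib, htot, sub_self, mul_zero, zero_sub] at hparts
  have hterm : 0 ≤ ∑ i ∈ range (K - 1),
      (c (i + 1) - c i) * (∑ j ∈ range (i + 1), u j - ∑ j ∈ range (i + 1), v j) := by
    refine sum_nonneg fun i hi => ?_
    have hiK : i + 1 < K := by have := mem_range.1 hi; omega
    rcases lt_or_ge i i₀ with hi₀ | hi₀
    · rw [sum_congr rfl fun j hj => heq j (by have := mem_range.1 hj; omega), sub_self,
        mul_zero]
    · exact mul_nonneg (sub_nonneg.2 (hc i hi₀ hiK)) (sub_nonneg.2 (hpre _ hiK))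
  have hsplit : ∑ j ∈ range K, c j * (u j - v j)
      = ∑ j ∈ range K, u j * c j - ∑ j ∈ range K, v j * c j := by
    rw [← sum_sub_distrib]; exact sum_congr rfl fun j _ => by ring
  linarith

section BottomFill

variable {c : ℕ → ℝ} {r : ℕ} {T : ℝ}

/-- Capacity `T` is filled greedily from the bottom row `r - 1` upwards; row `i` contributes
whatever part of `c i` still fits. -/
noncomputable def bottomFill (c : ℕ → ℝ) (r : ℕ) (T : ℝ) (i : ℕ) : ℝ :=
  min (∑ k ∈ Ico i r, c k) T - min (∑ k ∈ Ico (i + 1) r, c k) T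

theorem sum_Ico_bottomFill (hT : 0 ≤ T) (t : ℕ) :
    ∑ i ∈ Ico t r, bottomFill c r T i = min (∑ k ∈ Ico t r, c k) T := by
  rcases le_or_gt t r with htr | hrt
  · have := sum_Ico_sub (f := fun i => -min (∑ k ∈ Ico i r, c k) T) htr
    simpa only [bottomFill, Ico_self, sum_empty, min_eq_left hT, neg_zero, sub_neg_eq_add,
      neg_add_eq_sub, zero_add] using this
  · simp [Ico_eq_empty_of_le hrt.le, hT]

theorem bottomFill_mem_Icc {i : ℕ} (hi : i < r) (hc : 0 ≤ c i) :
    bottomFill c r T i ∈ Set.Icc 0 (c i) := by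
  rw [bottomFill, sum_eq_sum_Ico_succ_bot hi]
  generalize ∑ k ∈ Ico (i + 1) r, c k = x
  constructor <;> simp only [min_def] <;> split_ifs <;> linarith

end BottomFill

section KMWeights

variable {α : ℕ → ℝ}

theorem kmPi_nonneg (hα : ∀ k, α k ∈ Set.Icc 0 1) (i n : ℕ) : 0 ≤ kmPi α i n :=
  mul_nonneg (hα i).1 (prod_nonneg fun k _ => sub_nonneg.2 (hα k).2)

theorem kmPi_succ {j n : ℕ} (hj : j ≤ n) : kmPi α j (n + 1) = kmPi α j n * (1 - α (n + 1)) := by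
  rw [kmPi, kmPi, prod_Icc_succ_top (by omega), mul_assoc]

theorem kmPi_succ_le (hα : ∀ k, α k ∈ Set.Icc 0 1) {j n : ℕ} (hj : j ≤ n) :
    kmPi α j (n + 1) ≤ kmPi α j n := by
  rw [kmPi_succ hj]
  exact mul_le_of_le_one_right (kmPi_nonneg hα j n) (by linarith [(hα (n + 1)).1])

theorem sum_Ico_kmPi (t N : ℕ) :
    ∑ i ∈ Ico t (N + 1), kmPi α i N = 1 - ∏ k ∈ Ico t (N + 1), (1 - α k) := by
  rcases le_or_gt t (N + 1) with htN | hNt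
  · have hstep : ∀ i ∈ Ico t (N + 1), kmPi α i N
        = ∏ k ∈ Ico (i + 1) (N + 1), (1 - α k) - ∏ k ∈ Ico i (N + 1), (1 - α k) := by
      intro i hi
      rw [kmPi, ← Ico_add_one_right_eq_Icc, prod_eq_prod_Ico_succ_bot (mem_Ico.1 hi).2]
      ring
    rw [sum_congr rfl hstep, sum_Ico_sub (fun i => ∏ k ∈ Ico i (N + 1), (1 - α k)) htN, Ico_self,
      prod_empty]
  · simp [Ico_eq_empty_of_le hNt.le]

theorem sum_range_kmPi (hα0 : α 0 = 1) (N : ℕ) : ∑ i ∈ range (N + 1), kmPi α i N = 1 := by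
  rw [range_eq_Ico, sum_Ico_kmPi, prod_eq_zero (i := 0) (by simp) (by simp [hα0]), sub_zero]

theorem sum_Ico_kmPi_le_of_le (hα : ∀ k, α k ∈ Set.Icc 0 1) {m n : ℕ} (hmn : m ≤ n) (t : ℕ) :
    ∑ i ∈ Ico t (m + 1), kmPi α i m ≤ ∑ i ∈ Ico t (n + 1), kmPi α i n := by
  rw [sum_Ico_kmPi, sum_Ico_kmPi]
  refine sub_le_sub_left (prod_le_prod_of_subset_of_le_one (Ico_subset_Ico_right (by omega))
    (fun k _ => sub_nonneg.2 (hα k).2) (fun k _ _ => by linarith [(hα k).1])) 1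

end KMWeights

/-- Rows `i < r`, columns `j < s` with capacities `τ j`. The partial plan `w` underfills every
column, and row `i` still holds mass `e i` in a virtual column `s`, to be moved leftwards.
`hall` is the Hall condition for doing so without crossing the diagonal: what sits in rows and
columns `≥ t` fits into the capacity of the columns `≥ t`. -/
structure IsSubplanWithOverflow (r s : ℕ) (τ : ℕ → ℝ) (w : ℕ → ℕ → ℝ) (e : ℕ → ℝ) : Prop where
  w_nonneg : ∀ i < r, ∀ j < s, 0 ≤ w i j
  e_nonneg : ∀ i < r, 0 ≤ e i
  col_le : ∀ j < s, ∑ i ∈ range r, w i j ≤ τ j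
  total_eq : ∑ i ∈ range r, (∑ j ∈ range s, w i j + e i) = ∑ j ∈ range s, τ j
  hall : ∀ t ≤ s, ∑ i ∈ Ico t r, (∑ j ∈ Ico t s, w i j + e i) ≤ ∑ j ∈ Ico t s, τ j

/-- `y` completes `w` to a plan with column sums `τ` by moving the mass of each row only
leftwards (`sum_range_le`) and leaving the part below the diagonal untouched. -/
structure IsLeftCompletion (r s : ℕ) (τ : ℕ → ℝ) (w : ℕ → ℕ → ℝ) (e : ℕ → ℝ)
    (y : ℕ → ℕ → ℝ) : Prop where
  nonneg : ∀ i < r, ∀ j, 0 ≤ y i j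
  eq_zero : ∀ i j, s ≤ j → y i j = 0
  row_sum : ∀ i < r, ∑ j ∈ range s, y i j = ∑ j ∈ range s, w i j + e i
  col_sum : ∀ j < s, ∑ i ∈ range r, y i j = τ j
  eq_of_lt : ∀ i < r, ∀ j < i, j < s → y i j = w i j
  sum_range_le : ∀ i < r, ∀ t ≤ s, ∑ j ∈ range t, w i j ≤ ∑ j ∈ range t, y i j

/-- The part of the content `w i s + e i` of the last column that stays there. -/
noncomputable def keptMass (r s : ℕ) (τ : ℕ → ℝ) (w : ℕ → ℕ → ℝ) (e : ℕ → ℝ) : ℕ → ℝ :=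
  bottomFill (fun i => w i s + e i) r (τ s)

noncomputable def carriedMass (r s : ℕ) (τ : ℕ → ℝ) (w : ℕ → ℕ → ℝ) (e : ℕ → ℝ) (i : ℕ) : ℝ :=
  w i s + e i - keptMass r s τ w e i

namespace IsSubplanWithOverflow

variable {r s : ℕ} {τ : ℕ → ℝ} {w : ℕ → ℕ → ℝ} {e : ℕ → ℝ}

theorem e_eq_zero (h : IsSubplanWithOverflow r s τ w e) {i : ℕ} (hsi : s ≤ i) (hir : i < r) :
    e i = 0 := by
  have hsum := h.hall s le_rfl
  simp only [Ico_self, sum_empty, zero_add] at hsum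
  have hle := single_le_sum (fun k hk => h.e_nonneg k (mem_Ico.1 hk).2) (mem_Ico.2 ⟨hsi, hir⟩)
  exact le_antisymm (hle.trans hsum) (h.e_nonneg i hir)

theorem isLeftCompletion_zero (h : IsSubplanWithOverflow r 0 τ w e) :
    IsLeftCompletion r 0 τ w e 0 where
  nonneg := by simp
  eq_zero := by simp
  row_sum i hi := by simp [h.e_eq_zero (Nat.zero_le i) hi]
  col_sum := by simp
  eq_of_lt := by simp
  sum_range_le i _ t ht := by simp [Nat.le_zero.1 ht]

theorem capacity_nonneg (h : IsSubplanWithOverflow r (s + 1) τ w e) : 0 ≤ τ s :=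
  (sum_nonneg fun i hi => h.w_nonneg i (mem_range.1 hi) s s.lt_succ_self).trans
    (h.col_le s s.lt_succ_self)

theorem capacity_le_sum_last_col (h : IsSubplanWithOverflow r (s + 1) τ w e) :
    τ s ≤ ∑ i ∈ range r, (w i s + e i) := by
  have htot := h.total_eq
  have hcols : ∑ j ∈ range s, ∑ i ∈ range r, w i j ≤ ∑ j ∈ range s, τ j :=
    sum_le_sum fun j hj => h.col_le j (by have := mem_range.1 hj; omega)
  simp only [sum_range_succ, sum_add_distrib] at htot ⊢
  rw [sum_comm] at hcols
  linarith

theorem sum_keptMass (h : IsSubplanWithOverflow r (s + 1) τ w e) :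
    ∑ i ∈ range r, keptMass r s τ w e i = τ s := by
  rw [keptMass, range_eq_Ico, sum_Ico_bottomFill h.capacity_nonneg, ← range_eq_Ico,
    min_eq_right h.capacity_le_sum_last_col]

theorem keptMass_mem_Icc (h : IsSubplanWithOverflow r (s + 1) τ w e) {i : ℕ} (hi : i < r) :
    keptMass r s τ w e i ∈ Set.Icc 0 (w i s + e i) :=
  bottomFill_mem_Icc hi (add_nonneg (h.w_nonneg i hi s s.lt_succ_self) (h.e_nonneg i hi))

theorem hall_carriedMass (h : IsSubplanWithOverflow r (s + 1) τ w e) {t : ℕ} (ht : t ≤ s) :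
    ∑ i ∈ Ico t r, (∑ j ∈ Ico t s, w i j + carriedMass r s τ w e i) ≤ ∑ j ∈ Ico t s, τ j := by
  have hcarried : ∑ i ∈ Ico t r, carriedMass r s τ w e i
      = ∑ i ∈ Ico t r, (w i s + e i) - min (∑ i ∈ Ico t r, (w i s + e i)) (τ s) := by
    rw [← sum_Ico_bottomFill h.capacity_nonneg t]
    exact sum_sub_distrib _ _
  have hhall := h.hall t (by omega)
  simp only [sum_Ico_succ_top ht, add_assoc] at hhall
  rw [sum_add_distrib] at hhall
  have hinner : ∑ i ∈ Ico t r, ∑ j ∈ Ico t s, w i j ≤ ∑ j ∈ Ico t s, τ j := by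
    rw [sum_comm]
    refine sum_le_sum fun j hj => ?_
    have hjs : j < s := (mem_Ico.1 hj).2
    refine le_trans ?_ (h.col_le j (by omega))
    exact sum_le_sum_of_subset_of_nonneg (fun i hi => mem_range.2 (mem_Ico.1 hi).2)
      fun i hi _ => h.w_nonneg i (mem_range.1 hi) j (by omega)
  rw [sum_add_distrib, hcarried]
  rcases min_cases (∑ i ∈ Ico t r, (w i s + e i)) (τ s) with ⟨hmin, _⟩ | ⟨hmin, _⟩ <;>
    rw [hmin] <;> linarith

theorem carry (h : IsSubplanWithOverflow r (s + 1) τ w e) :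
    IsSubplanWithOverflow r s τ w (carriedMass r s τ w e) where
  w_nonneg i hi j hj := h.w_nonneg i hi j (by omega)
  e_nonneg i hi := sub_nonneg.2 (h.keptMass_mem_Icc hi).2
  col_le j hj := h.col_le j (by omega)
  total_eq := by
    have htot := h.total_eq
    simp only [carriedMass, sum_range_succ, ← add_sub_assoc, sum_sub_distrib, add_assoc]
      at htot ⊢
    rw [h.sum_keptMass]
    linarith
  hall t ht := h.hall_carriedMass ht

theorem isLeftCompletion_extend (h : IsSubplanWithOverflow r (s + 1) τ w e)
    {y : ℕ → ℕ → ℝ} (hy : IsLeftCompletion r s τ w (carriedMass r s τ w e) y) :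
    IsLeftCompletion r (s + 1) τ w e
      (fun i j => if j = s then keptMass r s τ w e i else y i j) := by
  have hprefix : ∀ i, ∀ t ≤ s, ∑ j ∈ range t, (if j = s then keptMass r s τ w e i else y i j)
      = ∑ j ∈ range t, y i j := fun i t ht =>
    sum_congr rfl fun j hj => if_neg (by have := mem_range.1 hj; omega)
  have hrow : ∀ i < r, ∑ j ∈ range (s + 1),
      (if j = s then keptMass r s τ w e i else y i j) = ∑ j ∈ range (s + 1), w i j + e i := by
    intro i hi
    rw [sum_range_succ, hprefix i s le_rfl, if_pos rfl, hy.row_sum i hi, sum_range_succ,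
      carriedMass]
    ring
  refine ⟨fun i hi j => ?_, fun i j hj => ?_, hrow, fun j hj => ?_, fun i hi j hji hj => ?_,
    fun i hi t ht => ?_⟩
  · split_ifs
    exacts [(h.keptMass_mem_Icc hi).1, hy.nonneg i hi j]
  · rw [if_neg (by omega)]
    exact hy.eq_zero i j (by omega)
  · rcases Nat.lt_succ_iff_lt_or_eq.1 hj with hj | rfl
    · simp only [if_neg hj.ne]
      exact hy.col_sum j hj
    · simp only [if_true]
      exact h.sum_keptMass
  · rcases Nat.lt_succ_iff_lt_or_eq.1 hj with hj | rfl
    · rw [if_neg hj.ne]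
      exact hy.eq_of_lt i hi j hji hj
    · -- a row `i > s` carries nothing on and has no overflow: Hall at `s` and at `s + 1`
      have hcarried := h.carry.e_eq_zero hji.le hi
      rw [carriedMass, h.e_eq_zero hji hi] at hcarried
      rw [if_pos rfl]
      linarith
  · rcases Nat.lt_succ_iff_lt_or_eq.1 (Nat.lt_succ_of_le ht) with ht | rfl
    · rw [hprefix i t (by omega)]
      exact hy.sum_range_le i hi t (by omega)
    · rw [hrow i hi]
      exact le_add_of_nonneg_right (h.e_nonneg i hi)

theorem exists_isLeftCompletion (h : IsSubplanWithOverflow r s τ w e) :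
    ∃ y, IsLeftCompletion r s τ w e y := by
  induction s generalizing e with
  | zero => exact ⟨0, h.isLeftCompletion_zero⟩
  | succ s ih =>
    obtain ⟨y, hy⟩ := ih h.carry
    exact ⟨_, h.isLeftCompletion_extend hy⟩

end IsSubplanWithOverflow

section Plans

variable {α : ℕ → ℝ} {D : ℕ → ℕ → ℝ} {m n : ℕ} {y z : ℕ → ℕ → ℝ}

theorem IsPlan.isSubplanWithOverflow (hα : ∀ k, α k ∈ Set.Icc 0 1) (hα0 : α 0 = 1)
    (hmn : m ≤ n) (hz : IsPlan α m (n + 1) z) :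
    IsSubplanWithOverflow (m + 1) (n + 1) (kmPi α · n) z (z · (n + 1)) where
  w_nonneg i hi j hj := hz.1 i (by omega) j (by omega)
  e_nonneg i hi := hz.1 i (by omega) _ le_rfl
  col_le j hj := (hz.2.2 j (by omega)).trans_le (kmPi_succ_le hα (by omega))
  total_eq := by
    simp only [← sum_range_succ]
    rw [sum_congr rfl fun i hi => hz.2.1 i (by have := mem_range.1 hi; omega),
      sum_range_kmPi hα0, sum_range_kmPi hα0]
  hall t ht := calc
    ∑ i ∈ Ico t (m + 1), (∑ j ∈ Ico t (n + 1), z i j + z i (n + 1))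
        ≤ ∑ i ∈ Ico t (m + 1), kmPi α i m := by
      refine sum_le_sum fun i hi => ?_
      have him : i ≤ m := by have := mem_Ico.1 hi; omega
      rw [← sum_Ico_succ_top ht, ← hz.2.1 i him, range_eq_Ico]
      exact sum_le_sum_of_subset_of_nonneg (Ico_subset_Ico_left (Nat.zero_le t))
        fun j hj _ => hz.1 i him j (by have := mem_Ico.1 hj; omega)
    _ ≤ ∑ j ∈ Ico t (n + 1), kmPi α j n := sum_Ico_kmPi_le_of_le hα hmn t

theorem IsLeftCompletion.isPlan (hz : IsPlan α m (n + 1) z)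
    (hy : IsLeftCompletion (m + 1) (n + 1) (kmPi α · n) z (z · (n + 1)) y) : IsPlan α m n y :=
  ⟨fun i hi j _ => hy.nonneg i (by omega) j,
    fun i hi => by rw [hy.row_sum i (by omega), ← sum_range_succ, hz.2.1 i hi],
    fun j hj => hy.col_sum j (by omega)⟩

theorem IsLeftCompletion.planCost_le (hmn : m ≤ n)
    (hD : ∀ i ≤ m, ∀ j, i ≤ j → j ≤ n → D i j ≤ D i (j + 1))
    (hy : IsLeftCompletion (m + 1) (n + 1) (kmPi α · n) z (z · (n + 1)) y) :
    planCost D m n y ≤ planCost D m (n + 1) z := by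
  refine sum_le_sum fun i hi => ?_
  have hi : i < m + 1 := mem_range.1 hi
  have hlast : y i (n + 1) * D i (n + 1) = 0 := by rw [hy.eq_zero i (n + 1) le_rfl, zero_mul]
  rw [← add_zero (∑ j ∈ range (n + 1), _), ← hlast, ← sum_range_succ (fun j => y i j * D i j)]
  refine sum_mul_le_sum_mul_of_prefix_sum_le (i₀ := i)
    (fun j hj => hy.eq_of_lt i hi j hj (by omega)) (fun t ht => hy.sum_range_le i hi t (by omega))
    ?_ (fun j hij hj => hD i (by omega) j hij (by omega))
  rw [sum_range_succ _ (n + 1), hy.eq_zero i (n + 1) le_rfl, add_zero, hy.row_sum i hi,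
    sum_range_succ _ (n + 1)]

theorem IsPlan.exists_isPlan_planCost_le (hα : ∀ k, α k ∈ Set.Icc 0 1) (hα0 : α 0 = 1)
    (hmn : m ≤ n) (hD : ∀ i ≤ m, ∀ j, i ≤ j → j ≤ n → D i j ≤ D i (j + 1))
    (hz : IsPlan α m (n + 1) z) :
    ∃ y, IsPlan α m n y ∧ planCost D m n y ≤ planCost D m (n + 1) z := by
  obtain ⟨y, hy⟩ := (hz.isSubplanWithOverflow hα hα0 hmn).exists_isLeftCompletion
  exact ⟨y, hy.isPlan hz, hy.planCost_le hmn hD⟩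

end Plans

/-- for fixed `m`, `n ↦ d_{mn}` is nondecreasing for `n ≥ m`. -/
theorem km_dist_mono_right (α : ℕ → ℝ) (hα0 : α 0 = 1)
    (hα : ∀ n, 1 ≤ n → α n ∈ Set.Ioo (0 : ℝ) 1)
    (D : ℕ → ℕ → ℝ) (hD : IsKMDist α D) :
    ∀ m n : ℕ, m ≤ n → D (m + 1) (n + 1) ≤ D (m + 1) (n + 2) := by
  obtain ⟨hD00, hD0, -, hleast⟩ := hD
  have hα01 : ∀ k, α k ∈ Set.Icc 0 1
    | 0 => by simp [hα0]
    | k + 1 => Set.Ioo_subset_Icc_self (hα (k + 1) (by omega))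
  intro m
  induction m using Nat.strong_induction_on with
  | _ m ih =>
  intro n hmn
  have hrow : ∀ i ≤ m, ∀ j, i ≤ j → j ≤ n → D i j ≤ D i (j + 1) := by
    rintro (_ | i) hi (_ | j) hij hjn
    · simp [hD00, hD0]
    · simp [hD0]
    · omega
    · exact ih i (by omega) j (by omega)
  obtain ⟨⟨z, hz, hzcost⟩, -⟩ := hleast m (n + 1)
  obtain ⟨y, hy, hcost⟩ := hz.exists_isPlan_planCost_le hα01 hα0 hmn hrow
  calc D (m + 1) (n + 1) ≤ planCost D m n y := (hleast m n).2 ⟨y, hy, rfl⟩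
    _ ≤ planCost D m (n + 1) z := hcost
    _ = D (m + 1) (n + 2) := hzcost.symm
end

section
/- Let α_n ≡ α ∈ [1/2, 1) and β = 1 − α. For 0 ≤ m < n, let z^{mn} be the inside-out optimal plan (z_{ii} = π_i^n, z_{mj} = π_j^n for m < j < n, z_{in} = π_i^m − π_i^n for i < m, z_{mn} = π_m^m − Σ_{j=m}^{n-1} π_j^n) and z̃^{mn} the product plan (z̃_{ii} = π_i^n for i ≤ m, z̃_{ij} = π_i^m π_j^n for i ≤ m < j ≤ n). Then Σ_{1 ≤ i ≤ m < j ≤ n} |z^{mn}_{ij} − z̃^{mn}_{ij}| ≤ 4β². -/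
open Finset

/-- The "inside-out" transport plan between `π^m` and `π^n` (for `m ≤ n`):
`z_{ii} = π_i^n` for `i ≤ m`, `z_{mj} = π_j^n` for `m < j < n`,
`z_{in} = π_i^m - π_i^n` for `i < m`, `z_{mn} = π_m^m - Σ_{j=m}^{n-1} π_j^n`,
and `z_{ij} = 0` otherwise. -/
noncomputable def zio (α : ℕ → ℝ) (m n : ℕ) (i j : ℕ) : ℝ :=
  if i = j then kmPi α i n
  else if i = m ∧ m < j ∧ j < n then kmPi α j n
  else if i < m ∧ j = n then kmPi α i m - kmPi α i n
  else if i = m ∧ j = n then kmPi α m m - ∑ k ∈ Finset.Ico m n, kmPi α k n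
  else 0
/-- The sub-optimal product transport plan between `π^m` and `π^n` (for `m ≤ n`):
`z̃_{ii} = π_i^n` for `i ≤ m`, `z̃_{ij} = π_i^m π_j^n` for `i ≤ m < j ≤ n`, else `0`. -/
noncomputable def ztilde (α : ℕ → ℝ) (m n : ℕ) (i j : ℕ) : ℝ :=
  if i = j ∧ i ≤ m then kmPi α i n
  else if i ≤ m ∧ m < j ∧ j ≤ n then kmPi α i m * kmPi α j n
  else 0

def constRates (α : ℝ) (k : ℕ) : ℝ := if k = 0 then 1 else α

noncomputable def kmWeight (α : ℝ) (n i : ℕ) : ℝ :=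
  if i < n then α * (1 - α) ^ (n - i) else 1 - α

theorem sum_Ico_mul_one_sub_pow {R : Type*} [CommRing R] (a : R) {m n : ℕ} (hmn : m ≤ n) :
    ∑ k ∈ Ico m n, a * (1 - a) ^ (n - k) = (1 - a) - (1 - a) ^ (n - m + 1) := by
  induction n, hmn using Nat.le_induction with
  | base => simp
  | succ n hmn ih =>
    have hshift : ∑ k ∈ Ico m n, a * (1 - a) ^ (n + 1 - k)
        = (1 - a) * ∑ k ∈ Ico m n, a * (1 - a) ^ (n - k) := by
      rw [mul_sum]
      refine sum_congr rfl fun k hk => ?_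
      rw [show n + 1 - k = n - k + 1 by grind, pow_succ]
      ring
    rw [sum_Ico_succ_top hmn, hshift, ih, Nat.add_sub_cancel_left,
      show n + 1 - m + 1 = n - m + 1 + 1 by omega, pow_succ, pow_one]
    ring

theorem kmPi_constRates (α : ℝ) {i : ℕ} (hi : 1 ≤ i) (n : ℕ) :
    kmPi (constRates α) i n = α * (1 - α) ^ (n - i) := by
  have hrate : ∀ k ∈ Icc (i + 1) n, 1 - constRates α k = 1 - α := fun k hk => by
    simp only [constRates, if_neg (show k ≠ 0 by grind)]
  rw [kmPi, prod_congr rfl hrate, prod_const, Nat.card_Icc, Nat.add_sub_add_right, constRates,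
    if_neg (by omega)]

theorem sum_Ico_kmPi_constRates (α : ℝ) {m n : ℕ} (hm : 1 ≤ m) (hmn : m ≤ n) :
    ∑ k ∈ Ico m n, kmPi (constRates α) k n = (1 - α) - (1 - α) ^ (n - m + 1) := by
  rw [← sum_Ico_mul_one_sub_pow α hmn]
  exact sum_congr rfl fun k hk => kmPi_constRates α (by grind) n

theorem kmWeight_nonneg {α : ℝ} (h0 : 0 ≤ α) (h1 : α ≤ 1) (n i : ℕ) : 0 ≤ kmWeight α n i := by
  unfold kmWeight
  split_ifs
  · have : 0 ≤ 1 - α := by linarith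
    positivity
  · linarith

theorem sum_Icc_kmWeight_le {α : ℝ} (h1 : α ≤ 1) (l n : ℕ) :
    ∑ i ∈ Icc l n, kmWeight α n i ≤ 2 * (1 - α) := by
  rcases le_or_gt l n with hln | hnl
  · have hgeom : ∑ i ∈ Ico l n, kmWeight α n i = (1 - α) - (1 - α) ^ (n - l + 1) := by
      rw [← sum_Ico_mul_one_sub_pow α hln]
      exact sum_congr rfl fun i hi => if_pos (mem_Ico.mp hi).2
    have hpow : 0 ≤ (1 - α) ^ (n - l + 1) := pow_nonneg (by linarith) _
    rw [← Ico_insert_right hln, sum_insert right_notMem_Ico, hgeom, kmWeight,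
      if_neg (lt_irrefl n)]
    linarith
  · rw [Icc_eq_empty_of_lt hnl, sum_empty]
    linarith

theorem abs_zio_sub_ztilde_le {α : ℝ} (h0 : 0 ≤ α) (h1 : α ≤ 1) {m n i j : ℕ}
    (hi : i ∈ Icc 1 m) (hj : j ∈ Icc (m + 1) n) :
    |zio (constRates α) m n i j - ztilde (constRates α) m n i j| ≤
      kmWeight α m i * kmWeight α n j := by
  obtain ⟨hi1, him⟩ := mem_Icc.mp hi
  obtain ⟨hmj, hjn⟩ := mem_Icc.mp hj
  have hβ0 : 0 ≤ 1 - α := by linarith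
  rcases him.lt_or_eq with him | him <;> rcases hjn.lt_or_eq with hjn | hjn <;>
    (try subst i) <;> (try subst j) <;>
    simp (disch := omega) only [zio, ztilde, kmWeight, if_pos, if_neg, true_and, and_true,
      ↓reduceIte, kmPi_constRates, Nat.sub_self, pow_zero, mul_one]
  · rw [zero_sub, abs_neg, abs_of_nonneg (by positivity)]
  · have hpow : (1 - α) ^ (n - m) ≤ 1 - α := pow_le_of_le_one hβ0 (by linarith) (by omega)
    have hdev : α * (1 - α) ^ (m - i) - α * (1 - α) ^ (n - i) - α * (1 - α) ^ (m - i) * α =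
        α * (1 - α) ^ (m - i) * ((1 - α) - (1 - α) ^ (n - m)) := by
      rw [show n - i = m - i + (n - m) by omega, pow_add]
      ring
    rw [hdev, abs_of_nonneg (mul_nonneg (by positivity) (by linarith))]
    exact mul_le_mul_of_nonneg_left (by linarith [pow_nonneg hβ0 (n - m)]) (by positivity)
  · rw [show ∀ x : ℝ, x - α * x = (1 - α) * x by intro x; ring, abs_of_nonneg (by positivity)]
  · have hpow : (1 - α) ^ (n - m + 1) ≤ (1 - α) ^ 2 :=
      pow_le_pow_of_le_one hβ0 (by linarith) (by omega)
    rw [sum_Ico_kmPi_constRates α hi1 (by omega),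
      show α - ((1 - α) - (1 - α) ^ (n - m + 1)) - α * α = (1 - α) ^ (n - m + 1) - (1 - α) ^ 2 by
        ring, abs_of_nonpos (by linarith)]
    nlinarith [pow_nonneg hβ0 (n - m + 1)]

theorem km_plans_close_general (α : ℝ) (hα : α ∈ Set.Ico (1 / 2 : ℝ) 1)
    (m n : ℕ) :
    ∑ i ∈ Finset.Icc 1 m, ∑ j ∈ Finset.Icc (m + 1) n,
      |zio (fun k => if k = 0 then 1 else α) m n i j -
        ztilde (fun k => if k = 0 then 1 else α) m n i j| ≤
      4 * (1 - α) ^ 2 := by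
  have h0 : 0 ≤ α := by linarith [hα.1]
  have h1 : α ≤ 1 := hα.2.le
  calc ∑ i ∈ Icc 1 m, ∑ j ∈ Icc (m + 1) n,
        |zio (constRates α) m n i j - ztilde (constRates α) m n i j|
      ≤ ∑ i ∈ Icc 1 m, ∑ j ∈ Icc (m + 1) n, kmWeight α m i * kmWeight α n j :=
        sum_le_sum fun i hi => sum_le_sum fun j hj => abs_zio_sub_ztilde_le h0 h1 hi hj
    _ = (∑ i ∈ Icc 1 m, kmWeight α m i) * ∑ j ∈ Icc (m + 1) n, kmWeight α n j :=
        (sum_mul_sum _ _ _ _).symm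
    _ ≤ (2 * (1 - α)) * (2 * (1 - α)) :=
        mul_le_mul (sum_Icc_kmWeight_le h1 _ _) (sum_Icc_kmWeight_le h1 _ _)
          (sum_nonneg fun j _ => kmWeight_nonneg h0 h1 n j) (by linarith)
    _ = 4 * (1 - α) ^ 2 := by ring

/-- for constant `α ∈ [1/2,1)`, `β = 1-α`, and `0 ≤ m < n`, the total
variation between the inside-out plan and the product plan over the off-diagonal
block `1 ≤ i ≤ m < j ≤ n` is at most `4β²`. -/
theorem km_plans_close (α : ℝ) (hα : α ∈ Set.Ico (1 / 2 : ℝ) 1)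
    (m n : ℕ) (hmn : m < n) :
    ∑ i ∈ Finset.Icc 1 m, ∑ j ∈ Finset.Icc (m + 1) n,
      |zio (fun k => if k = 0 then 1 else α) m n i j -
        ztilde (fun k => if k = 0 then 1 else α) m n i j| ≤
      4 * (1 - α) ^ 2 :=
  km_plans_close_general α hα m n
end
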